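/- The map h : F_n(S^1) → S^1 × ((0,1)^{n-1}) defined by h(x_0, x_1, ..., x_{n-1}) = (x_0, p^{-1}(x_1/x_0), ..., p^{-1}(x_{n-1}/x_0)), where p(t) = e^{2πit} and division is in ℂ, is well-defined on the configuration space (i.e., each x_k/x_0 ≠ 1 so p^{-1}(x_k/x_0) is defined) and is a local diffeomorphism onto its image S^1 × {(t_1,...,t_{n-1}) ∈ (0,1)^{n-1} : t_i pairwise distinct}. -/

import Mathlib

/-!
`h` is in fact a homeomorphism onto the open set `S¹ × {t ∈ (0,1)^{n-1} : tᵢ distinct}`, hence an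
open embedding and so a local homeomorphism. Its inverse `(x₀, t) ↦ (x₀, x₀ p(t₁), …, x₀ p(t_{n-1}))`
is visibly continuous; `h` is continuous because any `p⁻¹` as in the statement agrees off `1` with
the inverse of the open partial homeomorphism `p : (0,1) → S¹ \ {1}`, obtained from the quotient
map `ℝ → ℝ/ℤ` followed by `ℝ/ℤ ≃ₜ S¹`.
-/

open Real

/-- The `n`-th configuration space of the circle. -/
abbrev ConfS1 (n : ℕ) : Type := {x : Fin n → Circle // Function.Injective x}

/-- The map `h(x₀,…,x_{n-1}) = (x₀, p⁻¹(x₁/x₀), …, p⁻¹(x_{n-1}/x₀))`, where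
`pinv` is an inverse of `p(t) = e^{2πit}` on `S¹ \ {1}` (values at `1` are junk). -/
noncomputable def hmap (n : ℕ) (hn : 0 < n) (pinv : Circle → ℝ)
    (x : Fin n → Circle) : Circle × (Fin (n - 1) → ℝ) :=
  (x ⟨0, hn⟩, fun k => pinv (x ⟨(k : ℕ) + 1, by omega⟩ / x ⟨0, hn⟩))

open Set Function Topology

theorem isOpen_setOf_injective {ι X : Type*} [Finite ι] [TopologicalSpace X] [T2Space X] :
    IsOpen {f : ι → X | Injective f} := by
  simp only [Injective, ofPred_forall]
  refine isOpen_iInter_of_finite fun i => isOpen_iInter_of_finite fun j => ?_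
  by_cases h : i = j
  · simp [h]
  · simpa [h] using isOpen_ne_fun (continuous_apply i) (continuous_apply j)

noncomputable def expArc : OpenPartialHomeomorph ℝ Circle :=
  (AddCircle.openPartialHomeomorphCoe 1 0).transHomeomorph
    (AddCircle.homeomorphCircle one_ne_zero)

@[simp] theorem expArc_source : expArc.source = Ioo 0 1 := by
  simp [expArc]

@[simp] theorem expArc_apply (t : ℝ) : expArc t = Circle.exp (2 * π * t) := by
  simp [expArc, AddCircle.homeomorphCircle_apply, AddCircle.toCircle_apply_mk]

@[simp] theorem expArc_target : expArc.target = {1}ᶜ := by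
  ext z
  simp [expArc, Homeomorph.symm_apply_eq, AddCircle.homeomorphCircle_apply]

theorem injOn_exp_two_pi_mul : InjOn (fun t => Circle.exp (2 * π * t)) (Ioo 0 1) := by
  simpa [← expArc_apply] using expArc.injOn

theorem exp_two_pi_mul_ne_one {t : ℝ} (ht : t ∈ Ioo 0 1) : Circle.exp (2 * π * t) ≠ 1 := by
  simpa using expArc.map_source (expArc_source ▸ ht)

def IsNormalizedArg (pinv : Circle → ℝ) : Prop :=
  ∀ z : Circle, z ≠ 1 → pinv z ∈ Ioo (0 : ℝ) 1 ∧ Circle.exp (2 * π * pinv z) = z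

namespace IsNormalizedArg

variable {pinv : Circle → ℝ}

theorem eqOn_expArc_symm (hpinv : IsNormalizedArg pinv) : EqOn pinv expArc.symm {1}ᶜ :=
  fun z hz => (expArc.eq_symm_apply (by simpa using (hpinv z hz).1) (by simpa using hz)).2
    (by simpa using (hpinv z hz).2)

theorem continuousOn (hpinv : IsNormalizedArg pinv) : ContinuousOn pinv {1}ᶜ :=
  (expArc_target ▸ expArc.continuousOn_symm).congr hpinv.eqOn_expArc_symm

theorem apply_exp_two_pi_mul (hpinv : IsNormalizedArg pinv) {t : ℝ} (ht : t ∈ Ioo 0 1) :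
    pinv (Circle.exp (2 * π * t)) = t := by
  rw [hpinv.eqOn_expArc_symm (exp_two_pi_mul_ne_one ht), ← expArc_apply]
  exact expArc.left_inv (expArc_source ▸ ht)

end IsNormalizedArg

def hmapTarget (m : ℕ) : Set (Circle × (Fin m → ℝ)) :=
  {y | (∀ k, y.2 k ∈ Ioo (0 : ℝ) 1) ∧ Injective y.2}

theorem isOpen_hmapTarget (m : ℕ) : IsOpen (hmapTarget m) := by
  have : hmapTarget m = Prod.snd ⁻¹' ((univ.pi fun _ => Ioo 0 1) ∩ {t | Injective t}) := by
    ext; simp [hmapTarget]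
  rw [this]
  exact ((isOpen_set_pi finite_univ fun _ _ => isOpen_Ioo).inter
    isOpen_setOf_injective).preimage continuous_snd

noncomputable def hmapInv {m : ℕ} (y : Circle × (Fin m → ℝ)) : Fin (m + 1) → Circle :=
  Fin.cons y.1 fun k => y.1 * Circle.exp (2 * π * y.2 k)

section

variable {m : ℕ} {pinv : Circle → ℝ}

theorem hmap_succ (hn : 0 < m + 1) (x : Fin (m + 1) → Circle) :
    hmap (m + 1) hn pinv x = (x 0, fun k => pinv (x k.succ / x 0)) :=
  rfl

theorem apply_succ_div_apply_zero_ne_one (x : ConfS1 (m + 1)) (k : Fin m) :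
    x.1 k.succ / x.1 0 ≠ 1 :=
  div_ne_one.2 (x.2.ne (Fin.succ_ne_zero k))

theorem continuous_hmapInv : Continuous (hmapInv : Circle × (Fin m → ℝ) → _) :=
  Continuous.finCons continuous_fst <| continuous_pi fun k =>
    continuous_fst.mul (Circle.exp.continuous.comp
      (continuous_const.mul ((continuous_apply k).comp continuous_snd)))

theorem injective_hmapInv {y : Circle × (Fin m → ℝ)} (hy : y ∈ hmapTarget m) :
    Injective (hmapInv y) := by
  refine Fin.cons_injective_iff.2 ⟨?_, ?_⟩
  · rintro ⟨k, hk⟩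
    exact exp_two_pi_mul_ne_one (hy.1 k) (mul_eq_left.1 hk)
  · intro k j hkj
    exact hy.2 (injOn_exp_two_pi_mul (hy.1 k) (hy.1 j) (mul_left_cancel hkj))

theorem hmap_mem_hmapTarget (hn : 0 < m + 1) (hpinv : IsNormalizedArg pinv)
    (x : ConfS1 (m + 1)) : hmap (m + 1) hn pinv x.1 ∈ hmapTarget m := by
  refine ⟨fun k => (hpinv _ (apply_succ_div_apply_zero_ne_one x k)).1, fun k j hkj => ?_⟩
  have := congrArg (fun t => Circle.exp (2 * π * t)) hkj
  simp only [hmap_succ, (hpinv _ (apply_succ_div_apply_zero_ne_one x _)).2, div_left_inj] at this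
  exact Fin.succ_injective _ (x.2 this)

theorem continuous_hmap (hn : 0 < m + 1) (hpinv : IsNormalizedArg pinv) :
    Continuous fun x : ConfS1 (m + 1) => hmap (m + 1) hn pinv x.1 := by
  have hx : ∀ i : Fin (m + 1), Continuous fun x : ConfS1 (m + 1) => x.1 i := fun i =>
    (continuous_apply i).comp continuous_subtype_val
  refine (hx 0).prodMk (continuous_pi fun k => ?_)
  exact hpinv.continuousOn.comp_continuous ((hx _).div' (hx 0)) fun x =>
    apply_succ_div_apply_zero_ne_one x k

theorem hmapInv_hmap (hn : 0 < m + 1) (hpinv : IsNormalizedArg pinv) (x : ConfS1 (m + 1)) :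
    hmapInv (hmap (m + 1) hn pinv x.1) = x.1 := by
  funext i
  refine Fin.cases rfl (fun k => ?_) i
  simp only [hmapInv, hmap_succ, Fin.cons_succ,
    (hpinv _ (apply_succ_div_apply_zero_ne_one x k)).2, mul_div_cancel]

theorem hmap_hmapInv (hn : 0 < m + 1) (hpinv : IsNormalizedArg pinv)
    {y : Circle × (Fin m → ℝ)} (hy : y ∈ hmapTarget m) :
    hmap (m + 1) hn pinv (hmapInv y) = y := by
  ext k
  · rfl
  · simp only [hmapInv, hmap_succ, Fin.cons_succ, Fin.cons_zero, mul_div_cancel_left,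
      hpinv.apply_exp_two_pi_mul (hy.1 k)]

noncomputable def hmapHomeomorph (hn : 0 < m + 1) (hpinv : IsNormalizedArg pinv) :
    ConfS1 (m + 1) ≃ₜ hmapTarget m where
  toFun x := ⟨hmap (m + 1) hn pinv x.1, hmap_mem_hmapTarget hn hpinv x⟩
  invFun y := ⟨hmapInv y.1, injective_hmapInv y.2⟩
  left_inv x := Subtype.ext (hmapInv_hmap hn hpinv x)
  right_inv y := Subtype.ext (hmap_hmapInv hn hpinv y.2)
  continuous_toFun := (continuous_hmap hn hpinv).subtype_mk _
  continuous_invFun := (continuous_hmapInv.comp continuous_subtype_val).subtype_mk _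

theorem isOpenEmbedding_hmap (hn : 0 < m + 1) (hpinv : IsNormalizedArg pinv) :
    IsOpenEmbedding fun x : ConfS1 (m + 1) => hmap (m + 1) hn pinv x.1 :=
  (isOpen_hmapTarget m).isOpenEmbedding_subtypeVal.comp (hmapHomeomorph hn hpinv).isOpenEmbedding

theorem range_hmap (hn : 0 < m + 1) (hpinv : IsNormalizedArg pinv) :
    range (fun x : ConfS1 (m + 1) => hmap (m + 1) hn pinv x.1) = hmapTarget m :=
  ((hmapHomeomorph hn hpinv).surjective.range_comp Subtype.val).trans Subtype.range_coe

end

/-- The map `h` is well defined on the configuration space (each `x_k/x₀ ≠ 1`), and is a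
local homeomorphism (local diffeomorphism) onto its image
`S¹ × {(t₁,…,t_{n-1}) ∈ (0,1)^{n-1} : tᵢ pairwise distinct}`. -/
theorem hmap_local_homeomorphism_onto_image (n : ℕ) (hn : 0 < n)
    (pinv : Circle → ℝ)
    (hpinv : ∀ z : Circle, z ≠ 1 → pinv z ∈ Set.Ioo (0 : ℝ) 1 ∧
      Circle.exp (2 * π * pinv z) = z) :
    (∀ x : ConfS1 n, ∀ k : Fin (n - 1),
      (x : Fin n → Circle) ⟨(k : ℕ) + 1, by omega⟩ / (x : Fin n → Circle) ⟨0, hn⟩ ≠ 1) ∧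
    IsLocalHomeomorph (fun x : ConfS1 n => hmap n hn pinv (x : Fin n → Circle)) ∧
    Set.range (fun x : ConfS1 n => hmap n hn pinv (x : Fin n → Circle)) =
      {y : Circle × (Fin (n - 1) → ℝ) |
        (∀ k, y.2 k ∈ Set.Ioo (0 : ℝ) 1) ∧ Function.Injective y.2} := by
  obtain ⟨m, rfl⟩ : ∃ m, n = m + 1 := ⟨n - 1, by omega⟩
  exact ⟨apply_succ_div_apply_zero_ne_one, (isOpenEmbedding_hmap hn hpinv).isLocalHomeomorph,
    range_hmap hn hpinv⟩
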